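/- Let μ₁, μ₂ ∈ ℝ and σ₁, σ₂ ≥ 0. Then the pushforward π of the standard Gaussian measure on ℝ under the map z ↦ (μ₁ + σ₁ z, μ₂ + σ₂ z) is a coupling of the Gaussian measures N(μ₁, σ₁²) and N(μ₂, σ₂²), and its quadratic cost is ∫ (x−y)² dπ(x,y) = (μ₁ − μ₂)² + (σ₁ − σ₂)². Consequently, the squared 2-Wasserstein distance, i.e., the infimum over all couplings π of N(μ₁, σ₁²) and N(μ₂, σ₂²) of ∫ (x−y)² dπ, equals (μ₁ − μ₂)² + (σ₁ − σ₂)², and the infimum is attained. -/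

import Mathlib

/-!
For any coupling `(X, Y)` of laws with finite second moments,
`E[(X - Y)²] = (E X - E Y)² + Var X + Var Y - 2 Cov(X, Y)`, and Cauchy–Schwarz
`Cov(X, Y) ≤ √(Var X) √(Var Y)` bounds this below by `(E X - E Y)² + (√(Var X) - √(Var Y))²`.
For the Gaussian marginals this is `(μ₁ - μ₂)² + (σ₁ - σ₂)²`, and the comonotone coupling
`(μ₁ + σ₁ Z, μ₂ + σ₂ Z)` attains it, its cost being `E[((μ₁ - μ₂) + (σ₁ - σ₂) Z)²]`.
-/

open MeasureTheory ProbabilityTheory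

open scoped NNReal

namespace ProbabilityTheory

section Moments

variable {Ω : Type*} {mΩ : MeasurableSpace Ω} {μ : Measure Ω} {X Y : Ω → ℝ}

lemma sq_covariance_le_variance_mul_variance [IsFiniteMeasure μ] (hX : MemLp X 2 μ)
    (hY : MemLp Y 2 μ) : cov[X, Y; μ] ^ 2 ≤ Var[X; μ] * Var[Y; μ] := by
  have hquad (t : ℝ) : 0 ≤ Var[X; μ] * (t * t) + (-2 * cov[X, Y; μ]) * t + Var[Y; μ] := by
    have h := variance_fun_sub (hX.const_mul t) hY
    rw [variance_const_mul, covariance_const_mul_left] at h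
    linarith [variance_nonneg (fun ω ↦ t * X ω - Y ω) μ]
  -- Cauchy–Schwarz: the quadratic `t ↦ Var[t X - Y]` is nonnegative, so its
  -- discriminant `4 Cov² - 4 Var[X] Var[Y]` is nonpositive.
  have := discrim_le_zero hquad
  rw [discrim] at this
  linarith

lemma sq_sub_sqrt_variance_le_variance_sub [IsFiniteMeasure μ] (hX : MemLp X 2 μ)
    (hY : MemLp Y 2 μ) : (√Var[X; μ] - √Var[Y; μ]) ^ 2 ≤ Var[X - Y; μ] := by
  have hcov : cov[X, Y; μ] ≤ √Var[X; μ] * √Var[Y; μ] := by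
    rw [← Real.sqrt_mul (variance_nonneg X μ)]
    exact (le_abs_self _).trans
      (Real.abs_le_sqrt (sq_covariance_le_variance_mul_variance hX hY))
  rw [variance_sub hX hY]
  nlinarith [Real.sq_sqrt (variance_nonneg X μ), Real.sq_sqrt (variance_nonneg Y μ)]

lemma sq_sub_integral_add_sq_sub_sqrt_variance_le [IsProbabilityMeasure μ] (hX : MemLp X 2 μ)
    (hY : MemLp Y 2 μ) :
    (μ[X] - μ[Y]) ^ 2 + (√Var[X; μ] - √Var[Y; μ]) ^ 2 ≤ ∫ ω, (X ω - Y ω) ^ 2 ∂μ := by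
  have hmean : μ[X - Y] = μ[X] - μ[Y] := integral_sub (hX.integrable one_le_two)
    (hY.integrable one_le_two)
  have hvar := variance_eq_sub (hX.sub hY)
  rw [hmean] at hvar
  have := sq_sub_sqrt_variance_le_variance_sub hX hY
  simp only [Pi.pow_apply, Pi.sub_apply] at hvar
  linarith

end Moments

lemma sq_sub_integral_fst_snd_add_sq_sub_sqrt_variance_le {π : Measure (ℝ × ℝ)}
    [IsProbabilityMeasure π] (h₁ : MemLp id 2 π.fst) (h₂ : MemLp id 2 π.snd) :
    ((∫ x, x ∂π.fst) - ∫ x, x ∂π.snd) ^ 2 + (√Var[id; π.fst] - √Var[id; π.snd]) ^ 2 ≤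
      ∫ z, (z.1 - z.2) ^ 2 ∂π := by
  rw [Measure.fst, Measure.snd] at *
  rw [memLp_map_measure_iff aestronglyMeasurable_id measurable_fst.aemeasurable] at h₁
  rw [memLp_map_measure_iff aestronglyMeasurable_id measurable_snd.aemeasurable] at h₂
  rw [integral_map (f := fun x ↦ x) measurable_fst.aemeasurable aestronglyMeasurable_id,
    integral_map (f := fun x ↦ x) measurable_snd.aemeasurable aestronglyMeasurable_id,
    variance_id_map measurable_fst.aemeasurable, variance_id_map measurable_snd.aemeasurable]
  exact sq_sub_integral_add_sq_sub_sqrt_variance_le h₁ h₂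

lemma integral_sq_gaussianReal (m : ℝ) (v : ℝ≥0) : ∫ x, x ^ 2 ∂gaussianReal m v = m ^ 2 + v := by
  have h := variance_eq_sub (memLp_id_gaussianReal (μ := m) (v := v) 2)
  simp only [Pi.pow_apply, id] at h
  rw [variance_id_gaussianReal, integral_id_gaussianReal] at h
  linarith

lemma gaussianReal_map_const_add_mul (m σ : ℝ) :
    (gaussianReal 0 1).map (fun z ↦ m + σ * z) = gaussianReal m (σ ^ 2).toNNReal := by
  have hcomp : (fun z ↦ m + σ * z) = (m + ·) ∘ (σ * ·) := rfl
  rw [hcomp, ← Measure.map_map (measurable_const_add m) (measurable_const_mul σ),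
    gaussianReal_map_const_mul, gaussianReal_map_const_add, mul_zero, zero_add, mul_one,
    Real.toNNReal_of_nonneg (sq_nonneg σ)]

lemma integral_sq_const_add_mul_gaussianReal (a b : ℝ) :
    ∫ z, (a + b * z) ^ 2 ∂gaussianReal 0 1 = a ^ 2 + b ^ 2 := by
  have h := integral_map (μ := gaussianReal 0 1) (φ := fun z ↦ a + b * z) (f := fun x ↦ x ^ 2)
    (by fun_prop) (by fun_prop)
  rwa [gaussianReal_map_const_add_mul, integral_sq_gaussianReal,
    Real.coe_toNNReal _ (sq_nonneg b), eq_comm] at h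

end ProbabilityTheory

/-- The pushforward `π` of the standard Gaussian under `z ↦ (μ₁ + σ₁ z, μ₂ + σ₂ z)` is a
coupling of `N(μ₁, σ₁²)` and `N(μ₂, σ₂²)` with quadratic cost exactly
`(μ₁ − μ₂)² + (σ₁ − σ₂)²`; consequently the squared 2-Wasserstein distance between the two
Gaussians (the infimum of the quadratic cost over all couplings) equals
`(μ₁ − μ₂)² + (σ₁ − σ₂)²` and the infimum is attained. -/
theorem gaussian_W2sq_eq
    (μ₁ μ₂ σ₁ σ₂ : ℝ) (hσ₁ : 0 ≤ σ₁) (hσ₂ : 0 ≤ σ₂) :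
    (Measure.map (fun z => (μ₁ + σ₁ * z, μ₂ + σ₂ * z)) (gaussianReal 0 1)).fst =
        gaussianReal μ₁ (σ₁ ^ 2).toNNReal ∧
    (Measure.map (fun z => (μ₁ + σ₁ * z, μ₂ + σ₂ * z)) (gaussianReal 0 1)).snd =
        gaussianReal μ₂ (σ₂ ^ 2).toNNReal ∧
    (∫ z, (z.1 - z.2) ^ 2 ∂(Measure.map (fun z => (μ₁ + σ₁ * z, μ₂ + σ₂ * z))
        (gaussianReal 0 1))) = (μ₁ - μ₂) ^ 2 + (σ₁ - σ₂) ^ 2 ∧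
    IsLeast {c : ℝ | ∃ π : Measure (ℝ × ℝ), IsProbabilityMeasure π ∧
          π.fst = gaussianReal μ₁ (σ₁ ^ 2).toNNReal ∧
          π.snd = gaussianReal μ₂ (σ₂ ^ 2).toNNReal ∧
          c = ∫ z, (z.1 - z.2) ^ 2 ∂π}
        ((μ₁ - μ₂) ^ 2 + (σ₁ - σ₂) ^ 2) := by
  have hmeas : Measurable fun z : ℝ ↦ (μ₁ + σ₁ * z, μ₂ + σ₂ * z) := by fun_prop
  have hfst : (Measure.map (fun z => (μ₁ + σ₁ * z, μ₂ + σ₂ * z)) (gaussianReal 0 1)).fst =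
      gaussianReal μ₁ (σ₁ ^ 2).toNNReal := by
    rw [Measure.fst, Measure.map_map measurable_fst hmeas]
    exact gaussianReal_map_const_add_mul μ₁ σ₁
  have hsnd : (Measure.map (fun z => (μ₁ + σ₁ * z, μ₂ + σ₂ * z)) (gaussianReal 0 1)).snd =
      gaussianReal μ₂ (σ₂ ^ 2).toNNReal := by
    rw [Measure.snd, Measure.map_map measurable_snd hmeas]
    exact gaussianReal_map_const_add_mul μ₂ σ₂
  have hcost : (∫ z, (z.1 - z.2) ^ 2 ∂(Measure.map (fun z => (μ₁ + σ₁ * z, μ₂ + σ₂ * z))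
      (gaussianReal 0 1))) = (μ₁ - μ₂) ^ 2 + (σ₁ - σ₂) ^ 2 := by
    rw [integral_map hmeas.aemeasurable (by fun_prop),
      ← integral_sq_const_add_mul_gaussianReal (μ₁ - μ₂) (σ₁ - σ₂)]
    congr with z
    ring
  refine ⟨hfst, hsnd, hcost, ⟨_, Measure.isProbabilityMeasure_map hmeas.aemeasurable, hfst, hsnd,
    hcost.symm⟩, ?_⟩
  rintro _ ⟨π, hπ, hπ₁, hπ₂, rfl⟩
  have hbound := sq_sub_integral_fst_snd_add_sq_sub_sqrt_variance_le
    (hπ₁ ▸ memLp_id_gaussianReal 2) (hπ₂ ▸ memLp_id_gaussianReal 2)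
  rwa [hπ₁, hπ₂, integral_id_gaussianReal, integral_id_gaussianReal, variance_id_gaussianReal,
    variance_id_gaussianReal, Real.coe_toNNReal _ (sq_nonneg σ₁),
    Real.coe_toNNReal _ (sq_nonneg σ₂), Real.sqrt_sq hσ₁, Real.sqrt_sq hσ₂] at hbound
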